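/- arXiv:2312.17148 — 2 statements merged into one kernel-verified Lean document; each statement's English description precedes it below -/
import Mathlib

section
/- As a formal power series identity in x and s: Σ_{k≥1, n≥1} ζ({1}^{k−1}, \overline{n+1}) · x^k · s^n = 1 − ₂F₁(x, −s; 1−s; −1), where ζ({1}^{k−1}, \overline{n+1}) = Σ_{0 < n_1 < ⋯ < n_k} (−1)^{n_k} / (n_1 ⋯ n_{k−1} · n_k^{n+1}) is an alternating multiple zeta value. -/
open scoped Nat

/-- The Gauss hypergeometric series `₂F₁(a,b;c;z) = ∑ (a)ₘ(b)ₘ/((c)ₘ m!) zᵐ`,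
where `(q)ₘ` is the Pochhammer symbol (rising factorial). -/
noncomputable def hyp2F1 (a b c z : ℝ) : ℝ :=
  ∑' m : ℕ, (ascPochhammer ℝ m).eval a * (ascPochhammer ℝ m).eval b
      / ((ascPochhammer ℝ m).eval c * (m ! : ℝ)) * z ^ m

/-- The alternating multiple zeta value `ζ({1}^d, overline{n+1})
= ∑_{0<n₁<⋯<n_{d+1}} (-1)^{n_{d+1}} / (n₁⋯n_d · n_{d+1}^{n+1})`
(depth `d+1`, with `d` leading ones and final entry `n+1` carrying the sign `-1`). -/
noncomputable def azeta (d n : ℕ) : ℝ :=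
  ∑' f : {f : Fin (d + 1) → ℕ // StrictMono f ∧ 0 < f 0},
    (-1 : ℝ) ^ (f.1 (Fin.last d)) /
      ((∏ i : Fin d, (f.1 i.castSucc : ℝ)) * (f.1 (Fin.last d) : ℝ) ^ (n + 1))

open Finset Real

/-!
Grouping the sequences `0 < n₁ < ⋯ < n_{k+1}` by their last entry `n_{k+1} = m + 1` gives
`ζ({1}^k, \overline{n+2}) = ∑ₘ (-1)^(m+1) e_k(1, 1/2, …, 1/m) / (m+1)^(n+2)`.
Against `x^(k+1)` the elementary symmetric functions sum to
`x ∏_{j ≤ m} (1 + x/j) = (x)_{m+1} / m!`, and against `s^(n+1)` the powers of `m + 1` sum to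
`s / ((m+1)(m+1-s))`. Since `(-s)_{m+1} / (1-s)_{m+1} = -s / (m+1-s)`, the product is minus
the `(m+1)`-st term of `₂F₁(x, -s; 1-s; -1)`. The bound `∏_{j ≤ m} (1 + |x|/j) ≤ e (m+1)^|x|`
makes the triple series absolutely convergent, which justifies summing it in the other order.
-/

def strictMonoEquivPowersetCard {α : Type*} [LinearOrder α] (A : Finset α) (k : ℕ) :
    {g : Fin k → α // StrictMono g ∧ ∀ i, g i ∈ A} ≃ {T : Finset α // T ∈ A.powersetCard k} where
  toFun g := ⟨univ.map ⟨g.1, g.2.1.injective⟩, mem_powersetCard.2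
    ⟨fun a ha => by obtain ⟨i, -, rfl⟩ := mem_map.1 ha; exact g.2.2 i, by simp⟩⟩
  invFun T := ⟨T.1.orderEmbOfFin (mem_powersetCard.1 T.2).2, (orderEmbOfFin _ _).strictMono,
    fun i => (mem_powersetCard.1 T.2).1 (orderEmbOfFin_mem _ _ i)⟩
  left_inv g := Subtype.ext (orderEmbOfFin_unique _ (fun i => by simp) g.2.1).symm
  right_inv T := Subtype.ext <| coe_injective <| by simp [range_orderEmbOfFin]

lemma strictMono_snoc {α : Type*} [Preorder α] {n : ℕ} {g : Fin n → α} (hg : StrictMono g) {a : α}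
    (ha : ∀ i, g i < a) : StrictMono (Fin.snoc g a : Fin (n + 1) → α) := by
  intro i j hij
  induction j using Fin.lastCases with
  | last =>
    obtain ⟨i, rfl⟩ := Fin.exists_castSucc_eq.2 hij.ne
    simpa using ha i
  | cast j =>
    obtain ⟨i, rfl⟩ := Fin.exists_castSucc_eq.2 (hij.trans (Fin.castSucc_lt_last j)).ne
    simpa using hg (Fin.castSucc_lt_castSucc_iff.1 hij)

def strictMonoSnocEquiv (k : ℕ) :
    {f : Fin (k + 1) → ℕ // StrictMono f ∧ 0 < f 0} ≃
      Σ m : ℕ, {g : Fin k → ℕ // StrictMono g ∧ ∀ i, g i ∈ Icc 1 m} where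
  toFun f := ⟨f.1 (Fin.last k) - 1, Fin.init f.1, f.2.1.comp (Fin.strictMono_castSucc), fun i => by
    have h0 : f.1 0 ≤ f.1 i.castSucc := f.2.1.monotone (Fin.zero_le _)
    have hlast : f.1 i.castSucc < f.1 (Fin.last k) := f.2.1 (Fin.castSucc_lt_last i)
    simp only [Fin.init, mem_Icc]
    omega⟩
  invFun g := ⟨Fin.snoc g.2.1 (g.1 + 1),
    strictMono_snoc g.2.2.1 fun i => Nat.lt_succ_of_le (mem_Icc.1 (g.2.2.2 i)).2, by
    induction (0 : Fin (k + 1)) using Fin.lastCases with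
    | last => simp
    | cast i => simpa [Nat.pos_iff_ne_zero, Nat.one_le_iff_ne_zero] using (mem_Icc.1 (g.2.2.2 i)).1⟩
  left_inv f := by
    have hpos : 0 < f.1 (Fin.last k) := f.2.2.trans_le (f.2.1.monotone (Fin.zero_le _))
    ext1
    simp only [Nat.sub_add_cancel hpos, Fin.snoc_init_self]
  right_inv g := Sigma.subtype_ext (by simp) (by simp)

noncomputable def harmonicEsymm (k m : ℕ) : ℝ :=
  ∑ S ∈ (Icc 1 m).powersetCard k, ∏ j ∈ S, (j : ℝ)⁻¹

lemma harmonicEsymm_nonneg (k m : ℕ) : 0 ≤ harmonicEsymm k m :=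
  sum_nonneg fun _ _ => prod_nonneg fun _ _ => by positivity

lemma hasSum_strictMono_prod_inv (k m : ℕ) :
    HasSum (fun g : {g : Fin k → ℕ // StrictMono g ∧ ∀ i, g i ∈ Icc 1 m} => ∏ i, (g.1 i : ℝ)⁻¹)
      (harmonicEsymm k m) := by
  have h : HasSum (fun T : {T // T ∈ (Icc 1 m).powersetCard k} => ∏ j ∈ T.1, (j : ℝ)⁻¹)
      (harmonicEsymm k m) :=
    Finset.hasSum _ fun T : Finset ℕ => ∏ j ∈ T, (j : ℝ)⁻¹
  simpa [Function.comp_def, strictMonoEquivPowersetCard] using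
    (strictMonoEquivPowersetCard (Icc 1 m) k).hasSum_iff.2 h

lemma hasSum_harmonicEsymm_mul_pow (t : ℝ) (m : ℕ) :
    HasSum (fun k => harmonicEsymm k m * t ^ k) (∏ j ∈ Icc 1 m, (1 + t * (j : ℝ)⁻¹)) := by
  have hterm : (fun k => harmonicEsymm k m * t ^ k) =
      fun k => ∑ S ∈ (Icc 1 m).powersetCard k, ∏ j ∈ S, t * (j : ℝ)⁻¹ := by
    ext k
    rw [harmonicEsymm, sum_mul]
    refine sum_congr rfl fun S hS => ?_
    rw [prod_mul_distrib, prod_const, (mem_powersetCard.1 hS).2, mul_comm]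
  rw [prod_one_add, sum_powerset, Nat.card_Icc, Nat.add_sub_cancel, hterm]
  exact hasSum_sum_of_ne_finset_zero fun k hk => by
    rw [powersetCard_eq_empty.2 (by simpa using hk), sum_empty]

lemma hasSum_harmonicEsymm_mul_pow_succ (t : ℝ) (m : ℕ) :
    HasSum (fun k => harmonicEsymm k m * t ^ (k + 1))
      (t * ∏ j ∈ Icc 1 m, (1 + t * (j : ℝ)⁻¹)) := by
  have hterm : (fun k => harmonicEsymm k m * t ^ (k + 1)) =
      fun k => t * (harmonicEsymm k m * t ^ k) := by
    ext k
    ring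
  rw [hterm]
  exact (hasSum_harmonicEsymm_mul_pow t m).mul_left t

lemma prod_one_add_mul_inv_le {t : ℝ} (ht0 : 0 ≤ t) (ht1 : t ≤ 1) (m : ℕ) :
    ∏ j ∈ Icc 1 m, (1 + t * (j : ℝ)⁻¹) ≤ exp 1 * ((m : ℝ) + 1) ^ t := by
  have hlog : log m ≤ log (m + 1) := by
    rcases m.eq_zero_or_pos with rfl | hm
    · simp
    · exact log_le_log (by positivity) (by linarith)
  calc ∏ j ∈ Icc 1 m, (1 + t * (j : ℝ)⁻¹)
      ≤ exp (∑ j ∈ Icc 1 m, t * (j : ℝ)⁻¹) := prod_one_add_le_exp_sum _ fun j => by positivity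
    _ = exp (t * harmonic m) := by rw [← mul_sum, harmonic_eq_sum_Icc]; push_cast; rfl
    _ ≤ exp (1 + t * log (m + 1)) := by
      gcongr
      nlinarith [harmonic_le_one_add_log m, log_nonneg (by linarith : (1:ℝ) ≤ m + 1)]
    _ = exp 1 * ((m : ℝ) + 1) ^ t := by
      rw [exp_add, rpow_def_of_pos (by positivity), mul_comm t]

-- The exponent `1/2` is arbitrary: any `t < 1` makes `e_k(m) / (m+1)^2` summable.
lemma harmonicEsymm_le (k m : ℕ) :
    harmonicEsymm k m ≤ 2 ^ k * exp 1 * ((m : ℝ) + 1) ^ (1 / 2 : ℝ) := by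
  have h := (le_hasSum (hasSum_harmonicEsymm_mul_pow (1 / 2) m) k fun j _ =>
    mul_nonneg (harmonicEsymm_nonneg j m) (by positivity)).trans
    (prod_one_add_mul_inv_le (by norm_num) (by norm_num) m)
  calc harmonicEsymm k m = 2 ^ k * (harmonicEsymm k m * (1 / 2) ^ k) := by
        rw [mul_left_comm, ← mul_pow]; norm_num
    _ ≤ _ := by rw [mul_assoc]; gcongr

lemma summable_harmonicEsymm_div_pow (k n : ℕ) :
    Summable fun m : ℕ => harmonicEsymm k m / ((m : ℝ) + 1) ^ (n + 2) := by
  have hp : Summable fun m : ℕ => ((m : ℝ) + 1) ^ (-(3 / 2) : ℝ) := by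
    simpa using (summable_nat_add_iff 1).2 (summable_nat_rpow.2 (by norm_num : -(3 / 2 : ℝ) < -1))
  refine (hp.mul_left (2 ^ k * exp 1)).of_nonneg_of_le
    (fun m => div_nonneg (harmonicEsymm_nonneg k m) (by positivity)) fun m => ?_
  have hM : (1 : ℝ) ≤ m + 1 := by linarith [m.cast_nonneg (α := ℝ)]
  calc harmonicEsymm k m / ((m : ℝ) + 1) ^ (n + 2)
      ≤ 2 ^ k * exp 1 * ((m : ℝ) + 1) ^ (1 / 2 : ℝ) / ((m : ℝ) + 1) ^ 2 := by
        gcongr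
        · exact harmonicEsymm_le k m
        · omega
    _ = 2 ^ k * exp 1 * ((m : ℝ) + 1) ^ (-(3 / 2) : ℝ) := by
        rw [mul_div_assoc, ← rpow_natCast _ 2, ← rpow_sub (by positivity)]
        norm_num

lemma hasSum_azeta_succ (k n : ℕ) :
    HasSum (fun m : ℕ => (-1 : ℝ) ^ (m + 1) * harmonicEsymm k m / ((m : ℝ) + 1) ^ (n + 2))
      (azeta k (n + 1)) := by
  set v : (Σ m : ℕ, {g : Fin k → ℕ // StrictMono g ∧ ∀ i, g i ∈ Icc 1 m}) → ℝ :=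
    fun σ => (-1 : ℝ) ^ (σ.1 + 1) / ((σ.1 : ℝ) + 1) ^ (n + 2) * ∏ i, (σ.2.1 i : ℝ)⁻¹ with hv
  have hfiber : ∀ m, HasSum (fun g => v ⟨m, g⟩)
      ((-1 : ℝ) ^ (m + 1) / ((m : ℝ) + 1) ^ (n + 2) * harmonicEsymm k m) := fun m =>
    (hasSum_strictMono_prod_inv k m).mul_left _
  have habs : ∀ m, HasSum (fun g => |v ⟨m, g⟩|)
      (1 / ((m : ℝ) + 1) ^ (n + 2) * harmonicEsymm k m) := fun m => by
    have h : (fun g => |v ⟨m, g⟩|) =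
        fun g => 1 / ((m : ℝ) + 1) ^ (n + 2) * ∏ i, (g.1 i : ℝ)⁻¹ := by
      ext g
      simp [hv, abs_mul, abs_div, abs_prod, abs_of_nonneg (by positivity : (0 : ℝ) ≤ m + 1)]
    rw [h]
    exact (hasSum_strictMono_prod_inv k m).mul_left _
  have hsum : Summable v := by
    refine summable_abs_iff.1 ((summable_sigma_of_nonneg fun _ => abs_nonneg _).2
      ⟨fun m => (habs m).summable, ?_⟩)
    simpa [(habs _).tsum_eq, div_eq_inv_mul] using summable_harmonicEsymm_div_pow k n
  have hazeta : azeta k (n + 1) = ∑' σ, v σ := by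
    rw [azeta, ← (strictMonoSnocEquiv k).symm.tsum_eq]
    refine tsum_congr fun σ => ?_
    simp [hv, strictMonoSnocEquiv, div_eq_mul_inv]
    ring
  rw [hazeta]
  convert hsum.hasSum.sigma hfiber using 2 with m
  ring

lemma hasSum_pow_succ_div_pow {s M : ℝ} (hsM : |s| < M) :
    HasSum (fun n : ℕ => s ^ (n + 1) / M ^ (n + 2)) (s / (M * (M - s))) := by
  have hM : 0 < M := (abs_nonneg s).trans_lt hsM
  have hr : |s / M| < 1 := by rwa [abs_div, abs_of_pos hM, div_lt_one hM]
  have hMs : M - s ≠ 0 := by linarith [le_abs_self s]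
  have hterm :
      (fun n : ℕ => s ^ (n + 1) / M ^ (n + 2)) = fun n => s / M ^ 2 * (s / M) ^ n := by
    ext n
    rw [div_pow]
    field_simp
    ring
  have hsum : s / (M * (M - s)) = s / M ^ 2 * (1 - s / M)⁻¹ := by
    rw [one_sub_div hM.ne', inv_div]
    field_simp
  rw [hterm, hsum]
  exact (hasSum_geometric_of_abs_lt_one hr).mul_left _

noncomputable def azetaTerm (x s : ℝ) (m : ℕ) (p : ℕ × ℕ) : ℝ :=
  harmonicEsymm p.1 m * x ^ (p.1 + 1) * (s ^ (p.2 + 1) / ((m : ℝ) + 1) ^ (p.2 + 2))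

lemma abs_azetaTerm (x s : ℝ) (m : ℕ) (p : ℕ × ℕ) :
    |azetaTerm x s m p| = azetaTerm |x| |s| m p := by
  simp only [azetaTerm, abs_mul, abs_div, abs_pow, abs_of_nonneg (harmonicEsymm_nonneg _ _),
    abs_of_pos (by positivity : (0 : ℝ) < m + 1)]

lemma hasSum_azetaTerm (x : ℝ) {s : ℝ} (hs : |s| < 1) (m : ℕ) :
    HasSum (azetaTerm x s m)
      ((x * ∏ j ∈ Icc 1 m, (1 + x * (j : ℝ)⁻¹)) * (s / ((m + 1) * (m + 1 - s)))) := by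
  have hM : |s| < (m : ℝ) + 1 := by linarith [m.cast_nonneg (α := ℝ)]
  have hnorm_x : Summable fun k => ‖harmonicEsymm k m * x ^ (k + 1)‖ := by
    simpa [abs_mul, abs_of_nonneg (harmonicEsymm_nonneg _ _)] using
      (hasSum_harmonicEsymm_mul_pow_succ |x| m).summable
  have hnorm_s : Summable fun n : ℕ => ‖s ^ (n + 1) / ((m : ℝ) + 1) ^ (n + 2)‖ := by
    simpa [abs_div, abs_of_pos (by positivity : (0 : ℝ) < m + 1)] using
      (hasSum_pow_succ_div_pow (s := |s|) (by rwa [abs_abs])).summable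
  exact (hasSum_harmonicEsymm_mul_pow_succ x m).mul (hasSum_pow_succ_div_pow hM)
    (summable_mul_of_summable_norm (f := fun k => harmonicEsymm k m * x ^ (k + 1))
      (g := fun n : ℕ => s ^ (n + 1) / ((m : ℝ) + 1) ^ (n + 2)) hnorm_x hnorm_s)

lemma summable_azetaTerm {x s : ℝ} (hx0 : 0 ≤ x) (hx1 : x < 1) (hs0 : 0 ≤ s) (hs1 : s < 1) :
    Summable (Function.uncurry (azetaTerm x s)) := by
  have hnonneg : 0 ≤ Function.uncurry (azetaTerm x s) := fun q => by
    have := harmonicEsymm_nonneg q.2.1 q.1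
    simp only [Function.uncurry, azetaTerm]
    positivity
  have hp : Summable fun m : ℕ => ((m : ℝ) + 1) ^ (x - 2) := by
    simpa using (summable_nat_add_iff 1).2 (summable_nat_rpow.2 (by linarith : x - 2 < -1))
  refine (summable_prod_of_nonneg hnonneg).2 ⟨fun m => (hasSum_azetaTerm x
    (by rwa [abs_of_nonneg hs0]) m).summable, (hp.mul_left (exp 1 / (1 - s))).of_nonneg_of_le
    (fun m => tsum_nonneg fun p => hnonneg (m, p)) fun m => ?_⟩
  set M : ℝ := (m : ℝ) + 1
  have hM : 1 ≤ M := by linarith [m.cast_nonneg (α := ℝ)]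
  have hprod : x * ∏ j ∈ Icc 1 m, (1 + x * (j : ℝ)⁻¹) ≤ exp 1 * M ^ x :=
    (mul_le_of_le_one_left (prod_nonneg fun j _ => by positivity) hx1.le).trans
      (prod_one_add_mul_inv_le hx0 hx1.le m)
  have hgeo : s / (M * (M - s)) ≤ 1 / ((1 - s) * M ^ 2) := by
    have hMs : (1 - s) * M ^ 2 ≤ M * (M - s) := by
      nlinarith [mul_nonneg (mul_nonneg hs0 (by linarith : (0 : ℝ) ≤ M)) (by linarith : 0 ≤ M - 1)]
    calc s / (M * (M - s)) ≤ 1 / (M * (M - s)) := by gcongr; nlinarith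
      _ ≤ 1 / ((1 - s) * M ^ 2) :=
          one_div_le_one_div_of_le (mul_pos (by linarith) (by positivity)) hMs
  calc ∑' p, Function.uncurry (azetaTerm x s) (m, p)
      = (x * ∏ j ∈ Icc 1 m, (1 + x * (j : ℝ)⁻¹)) * (s / (M * (M - s))) :=
        (hasSum_azetaTerm x (by rwa [abs_of_nonneg hs0]) m).tsum_eq
    _ ≤ exp 1 * M ^ x * (1 / ((1 - s) * M ^ 2)) :=
        mul_le_mul hprod hgeo (div_nonneg hs0 (by nlinarith)) (by positivity)
    _ = exp 1 / (1 - s) * M ^ (x - 2) := by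
        rw [rpow_sub (by positivity), rpow_two]
        field_simp

lemma ascPochhammer_succ_eval_eq_mul_prod {K : Type*} [Field K] [CharZero K] (x : K) (m : ℕ) :
    (ascPochhammer K (m + 1)).eval x = x * (m ! : K) * ∏ j ∈ Icc 1 m, (1 + x * (j : K)⁻¹) := by
  induction m with
  | zero => simp
  | succ m ih =>
    have hm : (m : K) + 1 ≠ 0 := Nat.cast_add_one_ne_zero m
    rw [ascPochhammer_succ_eval, ih, prod_Icc_succ_top (by omega), Nat.factorial_succ]
    push_cast
    field_simp
    ring

noncomputable def hyp2F1Term (a b c z : ℝ) (m : ℕ) : ℝ :=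
  (ascPochhammer ℝ m).eval a * (ascPochhammer ℝ m).eval b
    / ((ascPochhammer ℝ m).eval c * (m ! : ℝ)) * z ^ m

lemma hyp2F1_eq_tsum (a b c z : ℝ) : hyp2F1 a b c z = ∑' m, hyp2F1Term a b c z m := rfl

lemma hyp2F1Term_zero (a b c z : ℝ) : hyp2F1Term a b c z 0 = 1 := by
  simp [hyp2F1Term]

lemma hyp2F1Term_succ (x : ℝ) {s : ℝ} (hs : s < 1) (m : ℕ) :
    hyp2F1Term x (-s) (1 - s) (-1) (m + 1) =
      -((-1) ^ (m + 1) * ((x * ∏ j ∈ Icc 1 m, (1 + x * (j : ℝ)⁻¹))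
        * (s / ((m + 1) * (m + 1 - s))))) := by
  have hneg : (ascPochhammer ℝ (m + 1)).eval (-s) = -s * (ascPochhammer ℝ m).eval (1 - s) := by
    simp only [ascPochhammer_succ_left, Polynomial.eval_mul, Polynomial.eval_X,
      Polynomial.eval_comp, Polynomial.eval_add, Polynomial.eval_one, neg_add_eq_sub]
  have hc : (ascPochhammer ℝ (m + 1)).eval (1 - s) =
      (ascPochhammer ℝ m).eval (1 - s) * (m + 1 - s) := by
    rw [ascPochhammer_succ_eval]
    ring
  have hpos := ascPochhammer_pos m (1 - s) (by linarith)
  have hms : (m : ℝ) + 1 - s ≠ 0 := by linarith [m.cast_nonneg (α := ℝ)]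
  rw [hyp2F1Term, hneg, hc, ascPochhammer_succ_eval_eq_mul_prod, Nat.factorial_succ]
  push_cast
  field_simp

/-- Generating series of `ζ({1}^{k-1}, overline{n+1})`:
`∑_{k,n≥1} ζ({1}^{k-1}, overline{n+1}) x^k s^n = 1 − ₂F₁(x,-s;1-s;-1)`. -/
theorem azeta_generating_series (x s : ℝ) (hx : |x| < 1) (hs : |s| < 1) :
    ∑' p : ℕ × ℕ, azeta p.1 (p.2 + 1) * x ^ (p.1 + 1) * s ^ (p.2 + 1)
      = 1 - hyp2F1 x (-s) (1 - s) (-1) := by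
  set G : ℕ → ℕ × ℕ → ℝ := fun m p => (-1) ^ (m + 1) * azetaTerm x s m p with hG
  have hsum : Summable (Function.uncurry G) :=
    (summable_azetaTerm (abs_nonneg x) hx (abs_nonneg s) hs).of_norm_bounded fun ⟨m, p⟩ => by
      simp [hG, abs_azetaTerm]
  have hrow : ∀ p : ℕ × ℕ, ∑' m, G m p = azeta p.1 (p.2 + 1) * x ^ (p.1 + 1) * s ^ (p.2 + 1) :=
    fun p => by
      rw [mul_assoc,
        ← ((hasSum_azeta_succ p.1 p.2).mul_right (x ^ (p.1 + 1) * s ^ (p.2 + 1))).tsum_eq]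
      refine tsum_congr fun m => ?_
      simp only [hG, azetaTerm]
      ring
  have hcol : ∀ m, ∑' p, G m p = -hyp2F1Term x (-s) (1 - s) (-1) (m + 1) := fun m => by
    rw [tsum_mul_left, (hasSum_azetaTerm x hs m).tsum_eq,
      hyp2F1Term_succ x (lt_of_abs_lt hs), neg_neg]
  have hT : HasSum (hyp2F1Term x (-s) (1 - s) (-1)) (1 - ∑' m, ∑' p, G m p) := by
    rw [← hasSum_nat_add_iff' 1]
    simpa [hcol, hyp2F1Term_zero] using hsum.prod.hasSum.neg
  rw [hyp2F1_eq_tsum, hT.tsum_eq, ← tsum_congr hrow, hsum.tsum_comm]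
  ring
end

section
/- Define the formal power series Ψ(z) = Σ_{k≥0} E_k(0) z^k, where E_k are the Euler polynomials. Then, as an identity of formal power series in x over the field of rational functions in s (equivalently, coefficientwise in x): Ψ(x/(x+s)) = 2 − ((x+s)/s)·Ψ(x/s). -/
/-- `E_k(0)`, the value at `0` of the `k`-th Euler polynomial
(defined by `2/(1+eᵗ) = ∑_k E_k(0) tᵏ/k!`), via the explicit formula. -/
noncomputable def eulerZero (k : ℕ) : ℚ :=
  ∑ i ∈ Finset.range (k + 1), (2 : ℚ)⁻¹ ^ i *
    ∑ j ∈ Finset.range (i + 1), (-1 : ℚ) ^ j * (i.choose j : ℚ) * (j : ℚ) ^ k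

/-- Formal composition `F ∘ G` of power series (intended for `G` with zero constant
term, in which case `coeff N (G^k) = 0` for `k > N` and the truncation is exact). -/
noncomputable def composePS {K : Type*} [CommRing K] (F G : PowerSeries K) : PowerSeries K :=
  PowerSeries.mk fun N =>
    ∑ k ∈ Finset.range (N + 1), PowerSeries.coeff (R := K) k F * PowerSeries.coeff (R := K) N (G ^ k)

/-- The formal power series `Ψ(z) = ∑_{k≥0} E_k(0) zᵏ`, over the field `ℚ(s)` of
rational functions (`s = RatFunc.X`). -/
noncomputable def PsiPS : PowerSeries (RatFunc ℚ) :=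
  PowerSeries.mk fun k => RatFunc.C (eulerZero k)

/-- The series `Ψ(x/s) = ∑_k E_k(0) xᵏ/sᵏ`, a power series in `x` over `ℚ(s)`. -/
noncomputable def PsiXS : PowerSeries (RatFunc ℚ) :=
  PowerSeries.mk fun k => RatFunc.C (eulerZero k) * (RatFunc.X)⁻¹ ^ k

/-- The formal expansion `x/(x+s) = ∑_{j≥1} (-1)^{j-1} xʲ/sʲ` as a power series in `x`. -/
noncomputable def xOverXPlusS : PowerSeries (RatFunc ℚ) :=
  PowerSeries.mk fun j => if j = 0 then 0 else (-1 : RatFunc ℚ) ^ (j - 1) * (RatFunc.X)⁻¹ ^ j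

/-!
Write `L` for the linear functional on polynomials with `L(xᵏ) = E_k(0)`. The explicit formula
for `E_k(0)` says `L(p) = ∑ᵢ (-1/2)ⁱ Δⁱp(0)`, and from this the Euler recurrence
`L(p(x+1)) + L(p) = 2 p(0)` follows by telescoping. With `u = x/s` we have `x/(x+s) = u/(1+u)`
and `[uᴺ] (u/(1+u))ᵏ = (-1)^(N-k) C(N-1, k-1)`, so for `N = M+1` the coefficient of `xᴺ` on the
left is `s⁻ᴺ L(x(x-1)ᴹ)`, while on the right it is `-s⁻ᴺ (E_M(0) + E_{M+1}(0)) = -s⁻ᴺ L((x+1)xᴹ)`.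
These agree by the recurrence applied to `p = x(x-1)ᴹ`, which vanishes at `0`.
-/

open Finset PowerSeries fwdDiff

theorem sum_neg_two_inv_pow_mul_two_mul_add {K : Type*} [Field K] [NeZero (2 : K)]
    (a : ℕ → K) (n : ℕ) :
    ∑ i ∈ range (n + 1), (-2 : K)⁻¹ ^ i * (2 * a i + a (i + 1))
      = 2 * a 0 + (-2 : K)⁻¹ ^ n * a (n + 1) := by
  induction n with
  | zero => simp
  | succ n ih =>
    rw [sum_range_succ, ih, pow_succ]
    field_simp
    ring

theorem fwdDiff_iter_comp_add_self {M G : Type*} [AddCommMonoid M] [AddCommGroup G]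
    (h : M) (f : M → G) (i : ℕ) (y : M) :
    (Δ_[h])^[i] (fun x => f (x + h)) y = (Δ_[h])^[i] f y + (Δ_[h])^[i + 1] f y := by
  rw [fwdDiff_iter_comp_add, Function.iterate_succ_apply', fwdDiff, add_sub_cancel]

theorem neg_one_pow_mul_neg_one_pow_sub {R : Type*} [Monoid R] [HasDistribNeg R] {i j : ℕ}
    (h : j ≤ i) : (-1 : R) ^ i * (-1) ^ (i - j) = (-1) ^ j := by
  rw [← pow_add, show i + (i - j) = j + 2 * (i - j) by omega, pow_add, pow_mul, neg_one_sq,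
    one_pow, mul_one]

theorem mul_sub_one_pow_eq_sum {R : Type*} [CommRing R] (x : R) (M : ℕ) :
    x * (x - 1) ^ M = ∑ k ∈ range (M + 1), (-1) ^ (M + k) * (M.choose k : R) * x ^ (k + 1) := by
  rw [sub_pow, mul_sum]
  refine sum_congr rfl fun k _ => ?_
  simp only [one_pow, mul_one]
  ring

section EulerTransform

variable {K : Type*} [Field K]

/-- Twice the (truncated) Euler transform `∑ᵢ (-1)ⁱ Δⁱf(0) / 2ⁱ⁺¹` of the alternating series
`∑ⱼ (-1)ʲ f(j)`. -/
noncomputable def eulerTransform (n : ℕ) : (K → K) →ₗ[K] K where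
  toFun f := ∑ i ∈ range n, (-2 : K)⁻¹ ^ i * (Δ_[1])^[i] f 0
  map_add' f g := by simp only [fwdDiff_iter_add, Pi.add_apply, mul_add, sum_add_distrib]
  map_smul' c f := by
    simp only [fwdDiff_iter_const_smul, Pi.smul_apply, smul_eq_mul, RingHom.id_apply, mul_sum]
    exact sum_congr rfl fun i _ => by ring

theorem eulerTransform_comp_add_one_add [NeZero (2 : K)] (f : K → K) (n : ℕ) :
    eulerTransform (n + 1) (fun x => f (x + 1)) + eulerTransform (n + 1) f
      = 2 * f 0 + (-2 : K)⁻¹ ^ n * (Δ_[1])^[n + 1] f 0 := by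
  simp only [eulerTransform, LinearMap.coe_mk, AddHom.coe_mk, fwdDiff_iter_comp_add_self,
    ← sum_add_distrib]
  exact (sum_congr rfl fun i _ => by ring).trans
    (sum_neg_two_inv_pow_mul_two_mul_add (fun i => (Δ_[1])^[i] f 0) n)

theorem eulerTransform_pow_of_lt {k n : ℕ} (h : k < n) :
    eulerTransform n (fun x : K => x ^ k) = eulerTransform (k + 1) (fun x : K => x ^ k) := by
  refine (sum_subset (range_subset_range.mpr h) fun i _ hi => ?_).symm
  rw [fwdDiff_iter_pow_eq_zero_of_lt (by simpa using hi), Pi.zero_apply, mul_zero]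

end EulerTransform

theorem eulerZero_eq_eulerTransform {k n : ℕ} (h : k < n) :
    eulerZero k = eulerTransform n (fun x : ℚ => x ^ k) := by
  rw [eulerTransform_pow_of_lt h, eulerZero]
  refine sum_congr rfl fun i _ => ?_
  rw [fwdDiff_iter_eq_sum_shift, mul_sum, mul_sum]
  refine sum_congr rfl fun j hj => ?_
  have hji : j ≤ i := Nat.lt_succ_iff.mp (mem_range.mp hj)
  have h_sign : (-2 : ℚ)⁻¹ ^ i = (-1) ^ i * 2⁻¹ ^ i := by rw [← mul_pow]; norm_num
  simp only [h_sign, zsmul_eq_mul, nsmul_eq_mul, mul_one, zero_add]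
  push_cast
  linear_combination
    (-2⁻¹ ^ i * (i.choose j : ℚ) * (j : ℚ) ^ k) * neg_one_pow_mul_neg_one_pow_sub (R := ℚ) hji

theorem sum_neg_one_pow_mul_choose_mul_eulerZero_succ (M : ℕ) :
    ∑ k ∈ range (M + 1), (-1) ^ (M + k) * (M.choose k : ℚ) * eulerZero (k + 1)
      = -(eulerZero M + eulerZero (M + 1)) := by
  set p : ℚ → ℚ := fun x => x * (x - 1) ^ M
  have hp_expand : p = ∑ k ∈ range (M + 1),
      ((-1) ^ (M + k) * (M.choose k : ℚ)) • fun x : ℚ => x ^ (k + 1) := by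
    funext x
    simp only [p, mul_sub_one_pow_eq_sum, Finset.sum_apply, Pi.smul_apply, smul_eq_mul]
  have hp_shift : (fun x => p (x + 1)) = (fun x : ℚ => x ^ M) + fun x => x ^ (M + 1) := by
    funext x
    simp only [p, Pi.add_apply]
    ring
  have hp_fwdDiff : (Δ_[1])^[M + 2] p 0 = 0 := by
    rw [hp_expand, fwdDiff_iter_finsetSum, Finset.sum_apply]
    refine sum_eq_zero fun k hk => ?_
    rw [fwdDiff_iter_const_smul, fwdDiff_iter_pow_eq_zero_of_lt (by simp at hk; omega)]
    simp
  have h_lhs : ∑ k ∈ range (M + 1), (-1) ^ (M + k) * (M.choose k : ℚ) * eulerZero (k + 1)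
      = eulerTransform (M + 2) p := by
    rw [hp_expand, map_sum]
    refine sum_congr rfl fun k hk => ?_
    rw [map_smul, smul_eq_mul, eulerZero_eq_eulerTransform (n := M + 2) (by simp at hk; omega)]
  have h_rec := eulerTransform_comp_add_one_add p (M + 1)
  rw [hp_shift, map_add, ← eulerZero_eq_eulerTransform (by omega),
    ← eulerZero_eq_eulerTransform (by omega), hp_fwdDiff] at h_rec
  simp only [p, zero_mul, mul_zero, add_zero] at h_rec
  linarith

theorem coeff_succ_X_mul_mk_one_pow_succ {R : Type*} [CommRing R] (M k : ℕ) :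
    coeff (M + 1) ((X * PowerSeries.mk 1 : R⟦X⟧) ^ (k + 1)) = M.choose k := by
  rw [mul_pow, mk_one_pow_eq_mk_choose_add, coeff_X_pow_mul']
  split_ifs with h
  · rw [coeff_mk, Nat.add_sub_add_right, Nat.add_sub_cancel' (by omega)]
  · rw [Nat.choose_eq_zero_of_lt (by omega), Nat.cast_zero]

theorem xOverXPlusS_eq_neg_rescale :
    xOverXPlusS = -rescale (-(RatFunc.X)⁻¹) (X * PowerSeries.mk 1) := by
  ext (_ | j)
  · simp [xOverXPlusS]
  · rw [map_neg, coeff_rescale, coeff_succ_X_mul, coeff_mk, xOverXPlusS, coeff_mk]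
    simp only [Nat.add_one_ne_zero, if_false, Nat.add_sub_cancel, Pi.one_apply, mul_one]
    ring

theorem coeff_succ_xOverXPlusS_pow_succ (M k : ℕ) :
    coeff (M + 1) (xOverXPlusS ^ (k + 1))
      = (-1) ^ (M + k) * M.choose k * (RatFunc.X : RatFunc ℚ)⁻¹ ^ (M + 1) := by
  have h_sign : (-1 : (RatFunc ℚ)⟦X⟧) ^ (k + 1) = C ((-1) ^ (k + 1)) := by simp
  rw [xOverXPlusS_eq_neg_rescale, neg_pow, ← map_pow, h_sign, coeff_C_mul, coeff_rescale,
    coeff_succ_X_mul_mk_one_pow_succ, neg_pow]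
  ring

theorem coeff_succ_composePS_xOverXPlusS (F : (RatFunc ℚ)⟦X⟧) (M : ℕ) :
    coeff (M + 1) (composePS F xOverXPlusS)
      = (∑ k ∈ range (M + 1), (-1) ^ (M + k) * M.choose k * coeff (k + 1) F)
          * (RatFunc.X : RatFunc ℚ)⁻¹ ^ (M + 1) := by
  rw [composePS, coeff_mk, sum_range_succ', pow_zero, coeff_one, if_neg (Nat.succ_ne_zero M),
    mul_zero, add_zero, sum_mul]
  refine sum_congr rfl fun k _ => ?_
  rw [coeff_succ_xOverXPlusS_pow_succ]
  ring

/-- `Ψ(x/(x+s)) = 2 − ((x+s)/s)·Ψ(x/s)` as formal power series in `x` over `ℚ(s)`. -/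
theorem psi_transformation :
    composePS PsiPS xOverXPlusS
      = 2 - (PowerSeries.X + PowerSeries.C (R := RatFunc ℚ) RatFunc.X)
          * PowerSeries.C (R := RatFunc ℚ) (RatFunc.X)⁻¹ * PsiXS := by
  have h_factor : (X + C (RatFunc.X : RatFunc ℚ)) * C (RatFunc.X)⁻¹ * PsiXS
      = PsiXS + C (RatFunc.X)⁻¹ * (X * PsiXS) := by
    rw [add_mul, ← map_mul, mul_inv_cancel₀ RatFunc.X_ne_zero, map_one]
    ring
  rw [h_factor, ← map_ofNat C 2]
  ext (_ | M)
  · simp [composePS, PsiPS, PsiXS, eulerZero]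
    norm_num
  · have h_euler := congrArg RatFunc.C (sum_neg_one_pow_mul_choose_mul_eulerZero_succ M)
    simp only [map_sum, map_mul, map_pow, map_neg, map_one, map_natCast, map_add] at h_euler
    rw [coeff_succ_composePS_xOverXPlusS, map_sub, map_add, coeff_C, if_neg M.succ_ne_zero,
      coeff_C_mul, coeff_succ_X_mul, PsiPS, PsiXS]
    simp only [coeff_mk]
    rw [h_euler]
    ring
end
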